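/- arXiv:2511.14333 — 3 statements merged into one kernel-verified Lean document; each statement's English description precedes it below -/
import Mathlib

section
/- For every real number L ≥ 1 there exists a constant C_L > 0, depending only on L, with the following property: for every probability space (Ω, F, P), every sub-σ-algebra G ⊆ F, and every real-valued random variable F with E[|F|^{8L}] < ∞, defining ψ^2(F) = (F − E[F | G])^2 and ψ^3(F) = (ψ^2(F) − E[ψ^2(F) | G])^2, one has E[|ψ^3(F)|^L] ≤ C_L ( E[|F|^{4L}] + E[|F|^{2L}]^{1/2} E[|F|^{6L}]^{1/2} + E[|F|^{2L}]^{1/2} E[|F|^{4L}]^{1/4} E[|F|^{8L}]^{1/4} ). -/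
/-!
Conditional expectation is a contraction on `Lᵖ` for `p ≥ 1`, so centering `f ↦ f - E[f|G]` at
most doubles an `Lᵖ` norm, while squaring turns the `L^{2p}` norm into a square:
`‖ψ f‖_p ≤ 4 ‖f‖_{2p}²`. Iterating, `‖ψ (ψ F)‖_L ≤ 64 ‖F‖_{4L}⁴`, that is
`E[|ψ³(F)|^L] ≤ 64^L E[|F|^{4L}]`, which is already bounded by the first term of the right-hand
side.
-/

open MeasureTheory ENNReal

namespace MeasureTheory

/-- In the paper's notation `ψ²(F) = centeredSq G μ F` and
`ψ³(F) = centeredSq G μ (centeredSq G μ F)`. -/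
noncomputable def centeredSq {α : Type*} {m0 : MeasurableSpace α} (m : MeasurableSpace α)
    (μ : Measure[m0] α) (f : α → ℝ) : α → ℝ :=
  fun x => (f x - μ[f|m] x) ^ 2

variable {α : Type*} {m m0 : MeasurableSpace α} {μ : Measure α}

lemma eLpNorm_sub_condExp_le {E : Type*} [NormedAddCommGroup E] [NormedSpace ℝ E]
    [CompleteSpace E] {f : α → E} (hf : AEStronglyMeasurable f μ) {p : ℝ≥0∞} (hp : 1 ≤ p) :
    eLpNorm (f - μ[f|m]) p μ ≤ 2 * eLpNorm f p μ :=
  calc eLpNorm (f - μ[f|m]) p μ ≤ eLpNorm f p μ + eLpNorm (μ[f|m]) p μ :=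
        eLpNorm_sub_le hf integrable_condExp.aestronglyMeasurable hp
    _ ≤ eLpNorm f p μ + eLpNorm f p μ := by gcongr; exact eLpNorm_condExp_le_eLpNorm f hp
    _ = 2 * eLpNorm f p μ := (two_mul _).symm

lemma eLpNorm_sq (f : α → ℝ) (p : ℝ≥0∞) :
    eLpNorm (fun x => f x ^ 2) p μ = eLpNorm f (2 * p) μ ^ 2 := by
  have h := eLpNorm_norm_rpow (p := p) (μ := μ) f two_pos
  simp only [Real.norm_eq_abs, Real.rpow_two, sq_abs, ENNReal.rpow_two, ofReal_ofNat] at h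
  rw [h, mul_comm]

lemma AEStronglyMeasurable.centeredSq {f : α → ℝ} (hf : AEStronglyMeasurable f μ) :
    AEStronglyMeasurable (centeredSq m μ f) μ :=
  (hf.sub integrable_condExp.aestronglyMeasurable).pow 2

lemma eLpNorm_centeredSq_le {f : α → ℝ} (hf : AEStronglyMeasurable f μ) {p : ℝ≥0∞}
    (hp : 1 ≤ 2 * p) : eLpNorm (centeredSq m μ f) p μ ≤ 4 * eLpNorm f (2 * p) μ ^ 2 :=
  calc eLpNorm (centeredSq m μ f) p μ = eLpNorm (f - μ[f|m]) (2 * p) μ ^ 2 :=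
        eLpNorm_sq (f - μ[f|m]) p
    _ ≤ (2 * eLpNorm f (2 * p) μ) ^ 2 := by gcongr; exact eLpNorm_sub_condExp_le hf hp
    _ = 4 * eLpNorm f (2 * p) μ ^ 2 := by rw [mul_pow]; norm_num

lemma eLpNorm_centeredSq_centeredSq_le {f : α → ℝ} (hf : AEStronglyMeasurable f μ)
    {p : ℝ≥0∞} (hp : 1 ≤ 2 * p) :
    eLpNorm (centeredSq m μ (centeredSq m μ f)) p μ ≤ 64 * eLpNorm f (4 * p) μ ^ 4 := by
  have h4p : 2 * (2 * p) = 4 * p := by rw [← mul_assoc]; norm_num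
  have hp' : 1 ≤ 2 * (2 * p) := hp.trans (by gcongr; exact le_mul_of_one_le_left' one_le_two)
  calc eLpNorm (centeredSq m μ (centeredSq m μ f)) p μ
      ≤ 4 * eLpNorm (centeredSq m μ f) (2 * p) μ ^ 2 := eLpNorm_centeredSq_le hf.centeredSq hp
    _ ≤ 4 * (4 * eLpNorm f (4 * p) μ ^ 2) ^ 2 := by
        gcongr; exact h4p ▸ eLpNorm_centeredSq_le hf hp'
    _ = 64 * eLpNorm f (4 * p) μ ^ 4 := by ring

lemma integral_abs_rpow_eq_toReal_eLpNorm {f : α → ℝ} (hf : AEStronglyMeasurable f μ) {q : ℝ}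
    (hq : 0 < q) : ∫ x, |f x| ^ q ∂μ = (eLpNorm f (ENNReal.ofReal q) μ ^ q).toReal := by
  have h := lpNorm_eq_integral_norm_rpow_toReal (by simpa using hq) ofReal_ne_top hf
  rw [← toReal_rpow, toReal_eLpNorm hf, h, toReal_ofReal hq.le]
  simp only [Real.norm_eq_abs]
  rw [← Real.rpow_mul (by positivity), inv_mul_cancel₀ hq.ne', Real.rpow_one]

lemma integral_abs_centeredSq_centeredSq_rpow_le {f : α → ℝ} {q : ℝ}
    (hf : MemLp f (ENNReal.ofReal (4 * q)) μ) (hq : 1 / 2 ≤ q) :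
    ∫ x, |centeredSq m μ (centeredSq m μ f) x| ^ q ∂μ ≤ 64 ^ q * ∫ x, |f x| ^ (4 * q) ∂μ := by
  have hq0 : 0 < q := by linarith
  have hp : 1 ≤ 2 * ENNReal.ofReal q := by
    rw [← ofReal_ofNat, ← ofReal_mul zero_le_two]; exact one_le_ofReal.mpr (by linarith)
  have h4q : ENNReal.ofReal (4 * q) = 4 * ENNReal.ofReal q := by
    rw [ofReal_mul zero_le_four, ofReal_ofNat]
  rw [integral_abs_rpow_eq_toReal_eLpNorm hf.1.centeredSq.centeredSq hq0,
    integral_abs_rpow_eq_toReal_eLpNorm hf.1 (by linarith), h4q]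
  calc (eLpNorm (centeredSq m μ (centeredSq m μ f)) (ENNReal.ofReal q) μ ^ q).toReal
      ≤ ((64 * eLpNorm f (4 * ENNReal.ofReal q) μ ^ 4) ^ q).toReal := by
        refine toReal_mono ?_ (rpow_le_rpow (eLpNorm_centeredSq_centeredSq_le hf.1 hp) hq0.le)
        have := h4q ▸ hf.eLpNorm_ne_top
        finiteness
    _ = 64 ^ q * (eLpNorm f (4 * ENNReal.ofReal q) μ ^ (4 * q)).toReal := by
        rw [mul_rpow_of_nonneg _ _ hq0.le, toReal_mul, ← toReal_rpow, rpow_mul, rpow_ofNat]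
        norm_num

end MeasureTheory

/-- Moment bound for the third iterate `ψ^3(F)` of the centering-and-squaring operation
`F ↦ (F − E[F|G])²`: for every `L ≥ 1` there is a constant `C_L > 0` such that
`E[|ψ^3(F)|^L] ≤ C_L (E[|F|^{4L}] + E[|F|^{2L}]^{1/2} E[|F|^{6L}]^{1/2}
  + E[|F|^{2L}]^{1/2} E[|F|^{4L}]^{1/4} E[|F|^{8L}]^{1/4})`. -/
theorem psi3_moment_bound (L : ℝ) (hL : 1 ≤ L) :
    ∃ C : ℝ, 0 < C ∧
      ∀ (Ω : Type) (mΩ : MeasurableSpace Ω) (μ : Measure Ω), IsProbabilityMeasure μ →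
      ∀ G : MeasurableSpace Ω, G ≤ mΩ →
      ∀ F : Ω → ℝ, AEStronglyMeasurable F μ →
        Integrable (fun ω => |F ω| ^ (8 * L)) μ →
        ∫ ω, |((F ω - (μ[F|G]) ω) ^ 2
              - (μ[fun ω' => (F ω' - (μ[F|G]) ω') ^ 2|G]) ω) ^ 2| ^ L ∂μ ≤
          C * ((∫ ω, |F ω| ^ (4 * L) ∂μ)
            + (∫ ω, |F ω| ^ (2 * L) ∂μ) ^ ((1 : ℝ) / 2)
                * (∫ ω, |F ω| ^ (6 * L) ∂μ) ^ ((1 : ℝ) / 2)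
            + (∫ ω, |F ω| ^ (2 * L) ∂μ) ^ ((1 : ℝ) / 2)
                * (∫ ω, |F ω| ^ (4 * L) ∂μ) ^ ((1 : ℝ) / 4)
                * (∫ ω, |F ω| ^ (8 * L) ∂μ) ^ ((1 : ℝ) / 4)) := by
  refine ⟨64 ^ L, by positivity, fun Ω mΩ μ _ G hG F hF hF8 => ?_⟩
  replace hF := hF.mono hG
  have hF4 : MemLp F (ENNReal.ofReal (4 * L)) μ := by
    refine (integrable_norm_rpow_iff hF (by simp; linarith) ofReal_ne_top).1 ?_
    rw [toReal_ofReal (by linarith)]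
    exact integrable_norm_rpow_of_le (q := 8 * L) hF (by linarith) (by linarith) (by linarith)
      (by simpa only [Real.norm_eq_abs] using hF8)
  refine (integral_abs_centeredSq_centeredSq_rpow_le (m := G) hF4 (by linarith)).trans ?_
  gcongr
  rw [add_assoc]
  exact le_add_of_nonneg_right (by positivity)
end

section
/- Let a, b, c and a_0, b_0, c_0 be nonzero real numbers, let σ^2 > 0 and σ_0^2 > 0, and let ψ_1, ψ_2, ψ_3, ψ_4 > 0 and ψ_{1,0}, ψ_{2,0}, ψ_{3,0}, ψ_{4,0} > 0. Set Λ = (1, a, b, c)^T and Λ_0 = (1, a_0, b_0, c_0)^T (column vectors in ℝ^4). If Λ σ^2 Λ^T + diag(ψ_1, ψ_2, ψ_3, ψ_4) = Λ_0 σ_0^2 Λ_0^T + diag(ψ_{1,0}, ψ_{2,0}, ψ_{3,0}, ψ_{4,0}) as 4 × 4 matrices, then a = a_0, b = b_0, c = c_0, σ^2 = σ_0^2, and ψ_i = ψ_{i,0} for i = 1, 2, 3, 4. -/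
open Matrix

/-- Identifiability of a one-factor model with four observed variables whose first loading
is fixed to 1: the implied covariance matrix `Λ σ² Λᵀ + diag(ψ₁,…,ψ₄)`, with all free
loadings nonzero, factor variance positive and error variances positive, determines the
loadings, the factor variance and the error variances uniquely. -/
theorem one_factor_identifiability
    (a b c a0 b0 c0 : ℝ) (ha : a ≠ 0) (hb : b ≠ 0) (hc : c ≠ 0)
    (ha0 : a0 ≠ 0) (hb0 : b0 ≠ 0) (hc0 : c0 ≠ 0)
    (σ2 σ02 : ℝ) (hσ2 : 0 < σ2) (hσ02 : 0 < σ02)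
    (ψ1 ψ2 ψ3 ψ4 ψ10 ψ20 ψ30 ψ40 : ℝ)
    (hψ1 : 0 < ψ1) (hψ2 : 0 < ψ2) (hψ3 : 0 < ψ3) (hψ4 : 0 < ψ4)
    (hψ10 : 0 < ψ10) (hψ20 : 0 < ψ20) (hψ30 : 0 < ψ30) (hψ40 : 0 < ψ40)
    (h : (Matrix.of fun i j : Fin 4 => ![1, a, b, c] i * σ2 * ![1, a, b, c] j)
          + Matrix.diagonal ![ψ1, ψ2, ψ3, ψ4]
        = (Matrix.of fun i j : Fin 4 => ![1, a0, b0, c0] i * σ02 * ![1, a0, b0, c0] j)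
          + Matrix.diagonal ![ψ10, ψ20, ψ30, ψ40]) :
    a = a0 ∧ b = b0 ∧ c = c0 ∧ σ2 = σ02 ∧
      ψ1 = ψ10 ∧ ψ2 = ψ20 ∧ ψ3 = ψ30 ∧ ψ4 = ψ40 := by
  have e := fun i j => congrFun (congrFun h i) j
  have h01 := e 0 1; have h02 := e 0 2; have h03 := e 0 3
  have h12 := e 1 2; have h13 := e 1 3; have h23 := e 2 3
  have h00 := e 0 0; have h11 := e 1 1; have h22 := e 2 2; have h33 := e 3 3
  simp [Matrix.add_apply, Matrix.diagonal_apply, Matrix.of_apply] at h01 h02 h03 h12 h13 h23 h00 h11 h22 h33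
  -- h01 : σ2 * a = σ02 * a0, etc.
  have hbb : b = b0 := by
    have key : a * σ2 * b = a * σ2 * b0 := by linear_combination h12 - b0 * h01
    exact mul_left_cancel₀ (mul_ne_zero ha hσ2.ne') key
  subst hbb
  have hσ : σ2 = σ02 := mul_right_cancel₀ hb h02
  subst hσ
  have haa : a = a0 := mul_left_cancel₀ hσ2.ne' h01
  have hcc : c = c0 := mul_left_cancel₀ hσ2.ne' h03
  subst haa; subst hcc
  refine ⟨rfl, rfl, rfl, rfl, ?_, ?_, ?_, ?_⟩ <;> linarith [h00, h11, h22, h33]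
end

section
/- Consider the parameter space Θ_1 = [(−100,0) ∪ (0,100)]^{11} × (0.01,100)^{15} ⊂ ℝ^{26} and, for θ = (θ^{(1)}, ..., θ^{(26)}) ∈ Θ_1, the 12 × 12 matrix Σ_1(θ) defined as the SEM-implied covariance structure with Λ_1 = (1, θ^{(1)}, θ^{(2)}, θ^{(3)})^T ∈ ℝ^{4×1}, Λ_2 ∈ ℝ^{8×2} with first column (1, θ^{(4)}, θ^{(5)}, θ^{(6)}, 0, 0, 0, 0)^T and second column (0, 0, 0, 0, 1, θ^{(7)}, θ^{(8)}, θ^{(9)})^T, Γ = (θ^{(10)}, θ^{(11)})^T ∈ ℝ^{2×1}, Σ_ξξ = θ^{(12)} (a 1 × 1 matrix), Σ_δδ = diag(θ^{(13)}, θ^{(14)}, θ^{(15)}, θ^{(16)}), Σ_εε = diag(θ^{(17)}, ..., θ^{(24)}), and Σ_ζζ = diag(θ^{(25)}, θ^{(26)}). Let θ_{1,0} = (0.5, 0.8, 0.3, 1.3, 0.8, 0.5, 0.9, 0.7, 1.1, −0.6, 0.9, 0.64, 0.36, 1.44, 0.64, 0.49, 1.69, 0.25, 0.49, 0.36, 0.81,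 0.64, 1.44, 1.21, 1.96, 0.36) ∈ Θ_1. Then for every θ_1 ∈ Θ_1, Σ_1(θ_1) = Σ_1(θ_{1,0}) implies θ_1 = θ_{1,0}. -/
open Matrix

/-- The SEM-implied covariance structure: given loading matrices `L1 : p1 × k1`,
`L2 : p2 × k2`, `G : k2 × k1` (with `Ψ = I`, i.e. `B = 0`) and covariance matrices
`Sxx, Sdd, See, Szz`, it is the block matrix
`[[L1 Sxx L1ᵀ + Sdd, L1 Sxx Gᵀ L2ᵀ], [(L1 Sxx Gᵀ L2ᵀ)ᵀ, L2 (G Sxx Gᵀ + Szz) L2ᵀ + See]]`. -/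
noncomputable def semCov {p1 p2 k1 k2 : ℕ}
    (L1 : Matrix (Fin p1) (Fin k1) ℝ) (L2 : Matrix (Fin p2) (Fin k2) ℝ)
    (G : Matrix (Fin k2) (Fin k1) ℝ)
    (Sxx : Matrix (Fin k1) (Fin k1) ℝ) (Sdd : Matrix (Fin p1) (Fin p1) ℝ)
    (See : Matrix (Fin p2) (Fin p2) ℝ) (Szz : Matrix (Fin k2) (Fin k2) ℝ) :
    Matrix (Fin p1 ⊕ Fin p2) (Fin p1 ⊕ Fin p2) ℝ :=
  Matrix.fromBlocks (L1 * Sxx * L1ᵀ + Sdd) (L1 * Sxx * Gᵀ * L2ᵀ)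
    (L1 * Sxx * Gᵀ * L2ᵀ)ᵀ (L2 * (G * Sxx * Gᵀ + Szz) * L2ᵀ + See)

/-- The implied covariance structure of Model 1, with parameter
`θ = (θ^(1), …, θ^(26))` (0-indexed as `θ 0, …, θ 25`). -/
noncomputable def Sigma1 (θ : Fin 26 → ℝ) : Matrix (Fin 4 ⊕ Fin 8) (Fin 4 ⊕ Fin 8) ℝ :=
  semCov
    (Matrix.of fun i (_ : Fin 1) => ![1, θ 0, θ 1, θ 2] i)
    (Matrix.of fun (i : Fin 8) (j : Fin 2) =>
      ![![1, 0], ![θ 3, 0], ![θ 4, 0], ![θ 5, 0],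
        ![0, 1], ![0, θ 6], ![0, θ 7], ![0, θ 8]] i j)
    (Matrix.of fun (i : Fin 2) (_ : Fin 1) => ![θ 9, θ 10] i)
    (Matrix.of fun (_ _ : Fin 1) => θ 11)
    (Matrix.diagonal ![θ 12, θ 13, θ 14, θ 15])
    (Matrix.diagonal ![θ 16, θ 17, θ 18, θ 19, θ 20, θ 21, θ 22, θ 23])
    (Matrix.diagonal ![θ 24, θ 25])

/-- The parameter space `Θ₁ = [(−100,0) ∪ (0,100)]^{11} × (0.01,100)^{15}` of Model 1. -/
def Theta1 : Set (Fin 26 → ℝ) :=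
  {θ | (∀ i : Fin 26, (i : ℕ) < 11 →
          θ i ∈ Set.Ioo (-100 : ℝ) 0 ∪ Set.Ioo (0 : ℝ) 100) ∧
       (∀ i : Fin 26, 11 ≤ (i : ℕ) → θ i ∈ Set.Ioo (0.01 : ℝ) 100)}

/-- The true parameter value `θ_{1,0}` of Model 1. -/
noncomputable def theta10 : Fin 26 → ℝ :=
  ![0.5, 0.8, 0.3, 1.3, 0.8, 0.5, 0.9, 0.7, 1.1, -0.6, 0.9, 0.64, 0.36, 1.44,
    0.64, 0.49, 1.69, 0.25, 0.49, 0.36, 0.81, 0.64, 1.44, 1.21, 1.96, 0.36]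

/-!
The entries of `Sigma1 θ` are polynomials in `θ`, and the parameters can be read off them one
after another, each time dividing by a nonzero product of parameters identified before. With
`φ = θ 11` and `σᵢⱼ` the covariance of the `i`-th and `j`-th `x`-indicators, `σ₁₂ = θ 0 * φ`,
`σ₁₃ = θ 1 * φ`, `σ₁₄ = θ 2 * φ` and `σ₂₃ = θ 0 * θ 1 * φ`, so `σ₂₃ / σ₁₂ = θ 1`, and then `φ`,
`θ 0`, `θ 2` follow. The first row of the cross block is `φ Λ₂ Γ`, which gives `Γ` and then the
`y`-loadings. The covariance of the first two indicators of `ηⱼ` is a loading times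
`Var ηⱼ = γⱼ² φ + ζⱼ`, which gives `ζ`; what is left of the diagonal are the error variances.
-/

section Entries

variable (θ : Fin 26 → ℝ)

lemma Sigma1_apply_inl_inl (i j : Fin 4) :
    Sigma1 θ (.inl i) (.inl j) =
      ![1, θ 0, θ 1, θ 2] i * ![1, θ 0, θ 1, θ 2] j * θ 11 +
        diagonal ![θ 12, θ 13, θ 14, θ 15] i j := by
  simp only [Sigma1, semCov, fromBlocks_apply₁₁, Matrix.add_apply, mul_apply, Fin.sum_univ_one,
    of_apply, transpose_apply]
  ring

lemma Sigma1_apply_inl_inr (i : Fin 4) (k : Fin 8) :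
    Sigma1 θ (.inl i) (.inr k) =
      ![1, θ 0, θ 1, θ 2] i * θ 11 *
        ![θ 9, θ 3 * θ 9, θ 4 * θ 9, θ 5 * θ 9, θ 10, θ 6 * θ 10, θ 7 * θ 10, θ 8 * θ 10] k := by
  simp only [Sigma1, semCov, fromBlocks_apply₁₂, mul_apply, Fin.sum_univ_two, Fin.sum_univ_one,
    of_apply, transpose_apply]
  fin_cases k <;> simp only [Fin.reduceFinMk, cons_val] <;> ring

lemma Sigma1_apply_inr_inr (k l : Fin 8) :
    Sigma1 θ (.inr k) (.inr l) =
      ![1, θ 3, θ 4, θ 5, 1, θ 6, θ 7, θ 8] k * ![1, θ 3, θ 4, θ 5, 1, θ 6, θ 7, θ 8] l *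
        !![θ 9 ^ 2 * θ 11 + θ 24, θ 9 * θ 10 * θ 11; θ 9 * θ 10 * θ 11, θ 10 ^ 2 * θ 11 + θ 25]
          (![0, 0, 0, 0, 1, 1, 1, 1] k) (![0, 0, 0, 0, 1, 1, 1, 1] l) +
        diagonal ![θ 16, θ 17, θ 18, θ 19, θ 20, θ 21, θ 22, θ 23] k l := by
  simp only [Sigma1, semCov, fromBlocks_apply₂₂, Matrix.add_apply, mul_apply, Fin.sum_univ_two,
    Fin.sum_univ_one, of_apply, transpose_apply, diagonal_apply]
  fin_cases k <;> fin_cases l <;>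
    simp only [Fin.reduceFinMk, cons_val, Fin.isValue, Fin.reduceEq, ↓reduceIte] <;> ring

end Entries

section Identification

variable {θ θ' : Fin 26 → ℝ}

lemma xLoadings_eq_of_Sigma1_eq (h : Sigma1 θ = Sigma1 θ')
    (h0 : θ' 0 ≠ 0) (h1 : θ' 1 ≠ 0) (h11 : θ' 11 ≠ 0) :
    θ 0 = θ' 0 ∧ θ 1 = θ' 1 ∧ θ 2 = θ' 2 ∧ θ 11 = θ' 11 := by
  have σ12 : θ 0 * θ 11 = θ' 0 * θ' 11 := by
    simpa [Sigma1_apply_inl_inl] using congr_fun₂ h (.inl 0) (.inl 1)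
  have σ13 : θ 1 * θ 11 = θ' 1 * θ' 11 := by
    simpa [Sigma1_apply_inl_inl] using congr_fun₂ h (.inl 0) (.inl 2)
  have σ14 : θ 2 * θ 11 = θ' 2 * θ' 11 := by
    simpa [Sigma1_apply_inl_inl] using congr_fun₂ h (.inl 0) (.inl 3)
  have σ23 : θ 0 * θ 1 * θ 11 = θ' 0 * θ' 1 * θ' 11 := by
    simpa [Sigma1_apply_inl_inl] using congr_fun₂ h (.inl 1) (.inl 2)
  have e1 : θ 1 = θ' 1 :=
    mul_left_cancel₀ (mul_ne_zero h0 h11) (by linear_combination σ23 - θ 1 * σ12)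
  have e11 : θ 11 = θ' 11 := mul_left_cancel₀ h1 (by linear_combination σ13 - θ 11 * e1)
  refine ⟨mul_left_cancel₀ h11 ?_, e1, mul_left_cancel₀ h11 ?_, e11⟩
  · linear_combination σ12 - θ 0 * e11
  · linear_combination σ14 - θ 2 * e11

lemma yLoadings_eq_of_Sigma1_eq (h : Sigma1 θ = Sigma1 θ') (e11 : θ 11 = θ' 11)
    (h9 : θ' 9 ≠ 0) (h10 : θ' 10 ≠ 0) (h11 : θ' 11 ≠ 0) :
    θ 3 = θ' 3 ∧ θ 4 = θ' 4 ∧ θ 5 = θ' 5 ∧ θ 6 = θ' 6 ∧ θ 7 = θ' 7 ∧ θ 8 = θ' 8 ∧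
      θ 9 = θ' 9 ∧ θ 10 = θ' 10 := by
  have row : ∀ k : Fin 8,
      ![θ 9, θ 3 * θ 9, θ 4 * θ 9, θ 5 * θ 9, θ 10, θ 6 * θ 10, θ 7 * θ 10, θ 8 * θ 10] k =
        ![θ' 9, θ' 3 * θ' 9, θ' 4 * θ' 9, θ' 5 * θ' 9,
          θ' 10, θ' 6 * θ' 10, θ' 7 * θ' 10, θ' 8 * θ' 10] k := fun k => by
    simpa [Sigma1_apply_inl_inr, e11, h11] using congr_fun₂ h (.inl 0) (.inr k)
  have e9 : θ 9 = θ' 9 := row 0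
  have e10 : θ 10 = θ' 10 := row 4
  exact ⟨by simpa [e9, h9] using row 1, by simpa [e9, h9] using row 2,
    by simpa [e9, h9] using row 3, by simpa [e10, h10] using row 5,
    by simpa [e10, h10] using row 6, by simpa [e10, h10] using row 7, e9, e10⟩

lemma eq_of_Sigma1_eq_of_forall_lt (h : Sigma1 θ = Sigma1 θ')
    (hs : ∀ i : Fin 26, (i : ℕ) < 12 → θ i = θ' i) (h3 : θ' 3 ≠ 0) (h6 : θ' 6 ≠ 0) :
    θ = θ' := by
  have hδ : ∀ i : Fin 4, ![θ 12, θ 13, θ 14, θ 15] i = ![θ' 12, θ' 13, θ' 14, θ' 15] i :=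
    fun i => by simpa [Sigma1_apply_inl_inl, hs] using congr_fun₂ h (.inl i) (.inl i)
  have e24 : θ 24 = θ' 24 := by
    simpa [Sigma1_apply_inr_inr, hs, h3] using congr_fun₂ h (.inr 0) (.inr 1)
  have e25 : θ 25 = θ' 25 := by
    simpa [Sigma1_apply_inr_inr, hs, h6] using congr_fun₂ h (.inr 4) (.inr 5)
  have hε : ∀ k : Fin 8, ![θ 16, θ 17, θ 18, θ 19, θ 20, θ 21, θ 22, θ 23] k =
      ![θ' 16, θ' 17, θ' 18, θ' 19, θ' 20, θ' 21, θ' 22, θ' 23] k :=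
    fun k => by simpa [Sigma1_apply_inr_inr, hs, e24, e25] using congr_fun₂ h (.inr k) (.inr k)
  funext i
  fin_cases i
  all_goals first | exact hs _ (by decide) | skip
  exacts [hδ 0, hδ 1, hδ 2, hδ 3, hε 0, hε 1, hε 2, hε 3, hε 4, hε 5, hε 6, hε 7, e24, e25]

theorem eq_of_Sigma1_eq (h : Sigma1 θ = Sigma1 θ') (h0 : θ' 0 ≠ 0) (h1 : θ' 1 ≠ 0)
    (h3 : θ' 3 ≠ 0) (h6 : θ' 6 ≠ 0) (h9 : θ' 9 ≠ 0) (h10 : θ' 10 ≠ 0) (h11 : θ' 11 ≠ 0) :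
    θ = θ' := by
  obtain ⟨e0, e1, e2, e11⟩ := xLoadings_eq_of_Sigma1_eq h h0 h1 h11
  obtain ⟨e3, e4, e5, e6, e7, e8, e9, e10⟩ := yLoadings_eq_of_Sigma1_eq h e11 h9 h10 h11
  refine eq_of_Sigma1_eq_of_forall_lt h (fun i hi => ?_) h3 h6
  fin_cases i <;> first | assumption | exact absurd hi (by decide)

end Identification

lemma theta10_mem_Theta1 : theta10 ∈ Theta1 := by
  refine ⟨fun i hi => ?_, fun i hi => ?_⟩ <;> fin_cases i <;> revert hi <;> norm_num [theta10]

lemma ne_zero_of_mem_Theta1 {θ : Fin 26 → ℝ} (hθ : θ ∈ Theta1) (i : Fin 26) : θ i ≠ 0 := by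
  rcases lt_or_ge (i : ℕ) 11 with hi | hi
  · rcases hθ.1 i hi with ⟨_, hneg⟩ | ⟨hpos, _⟩
    exacts [hneg.ne, hpos.ne']
  · exact ((hθ.2 i hi).1.trans' (by norm_num)).ne'

/-- Identifiability of Model 1: `θ_{1,0} ∈ Θ₁` and for every `θ₁ ∈ Θ₁`,
`Σ₁(θ₁) = Σ₁(θ_{1,0})` implies `θ₁ = θ_{1,0}`. -/
theorem model1_identifiability :
    theta10 ∈ Theta1 ∧
      ∀ θ1 ∈ Theta1, Sigma1 θ1 = Sigma1 theta10 → θ1 = theta10 := by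
  have hne := ne_zero_of_mem_Theta1 theta10_mem_Theta1
  exact ⟨theta10_mem_Theta1, fun _ _ h =>
    eq_of_Sigma1_eq h (hne 0) (hne 1) (hne 3) (hne 6) (hne 9) (hne 10) (hne 11)⟩
end
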